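/- arXiv:2501.05746 — 2 statements merged into one kernel-verified Lean document; each statement's English description precedes it below -/
import Mathlib

section
/- Fix a real s > 3/2, and let L(A;s) = Σ'_{i,j,k∈ℤ} g(A;i,j,k)^{-s}. Then the partial derivative of L(A;s) with respect to A, evaluated at A = 1/2, equals 0. -/
/-- The quadratic form `g(A;i,j,k) = (A(i+j)² + (j+k)² + (i+k)²)/(A+1)`. -/
noncomputable def cuboidalG (A : ℝ) (p : ℤ × ℤ × ℤ) : ℝ :=
  (A * ((p.1 : ℝ) + (p.2.1 : ℝ))^2 + ((p.2.1 : ℝ) + (p.2.2 : ℝ))^2 +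
    ((p.1 : ℝ) + (p.2.2 : ℝ))^2) / (A + 1)

/-- The Epstein zeta function `L(A;s) = Σ'_{(i,j,k)≠(0,0,0)} g(A;i,j,k)^{-s}`. -/
noncomputable def epsteinL (A s : ℝ) : ℝ :=
  ∑' p : {p : ℤ × ℤ × ℤ // p ≠ 0}, (cuboidalG A p.1) ^ (-s)

/-! The form `g(1/2; ·)` is invariant under `bccRotation`, a rotation of order three of the
lattice, while the `A`-derivative of `g` is traceless with respect to `g(1/2; ·)`: its three
rotates add up to zero. On `1/3 ≤ A ≤ 1` both `g(A; p)^{-s}` and its `A`-derivative are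
dominated by a multiple of `(1 + |p|²)^{-s}`, so `L` may be differentiated termwise. The
resulting lattice sum for `∂_A L(1/2; s)` is unchanged when its summand is composed with the
rotation, so it is a third of the sum of the summand over the rotation orbits, i.e. zero. -/

open Set Real

theorem tsum_eq_zero_of_add_comp_add_comp_eq_zero {α E : Type*} [AddCommGroup E]
    [TopologicalSpace E] [IsTopologicalAddGroup E] [T2Space E] [IsAddTorsionFree E]
    {f : α → E} (hf : Summable f) (e : α ≃ α) (h : ∀ x, f x + f (e x) + f (e (e x)) = 0) :
    ∑' x, f x = 0 := by
  have hfe : Summable fun x => f (e x) := e.summable_iff.2 hf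
  have hfee : Summable fun x => f (e (e x)) := e.summable_iff.2 hfe
  have h3 : 3 • ∑' x, f x = 0 := calc
    3 • ∑' x, f x = ∑' x, f x + ∑' x, f (e x) + ∑' x, f (e (e x)) := by
      rw [e.tsum_eq (fun x => f (e x)), e.tsum_eq f]; abel
    _ = ∑' x, (f x + f (e x) + f (e (e x))) := by
      rw [(hf.add hfe).tsum_add hfee, hf.tsum_add hfe]
    _ = 0 := by simp only [h, tsum_zero]
  exact (nsmul_eq_zero_iff_right three_ne_zero).1 h3

theorem summable_one_add_sq_rpow_neg {t : ℝ} (ht : 1 / 2 < t) :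
    Summable fun n : ℤ => (1 + (n : ℝ) ^ 2) ^ (-t) := by
  refine (summable_abs_int_rpow (b := 2 * t) (by linarith)).of_norm_bounded_eventually ?_
  filter_upwards [(Set.finite_singleton (0 : ℤ)).compl_mem_cofinite] with n hn
  have hn : (0 : ℝ) < |(n : ℝ)| ^ 2 := by
    have : (n : ℝ) ≠ 0 := by simpa using hn
    positivity
  calc ‖(1 + (n : ℝ) ^ 2) ^ (-t)‖ = (1 + |(n : ℝ)| ^ 2) ^ (-t) := by
        rw [sq_abs, norm_of_nonneg (by positivity)]
    _ ≤ (|(n : ℝ)| ^ 2) ^ (-t) := rpow_le_rpow_of_nonpos hn (by linarith) (by linarith)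
    _ = |(n : ℝ)| ^ (-(2 * t)) := by
        rw [← rpow_natCast, ← rpow_mul (abs_nonneg _)]; push_cast; ring_nf

theorem add_add_le_four_mul_div {A a b c : ℝ} (hA : A ∈ Icc (1 / 3) 1) (ha : 0 ≤ a)
    (hb : 0 ≤ b) (hc : 0 ≤ c) : a + b + c ≤ 4 * ((A * a + b + c) / (A + 1)) := by
  obtain ⟨hA₁, hA₂⟩ := hA
  rw [mul_div_assoc', le_div_iff₀ (by linarith)]
  nlinarith [mul_nonneg (sub_nonneg.2 hA₁) ha, mul_nonneg (sub_nonneg.2 hA₂) (add_nonneg hb hc)]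

theorem abs_sub_sub_div_sq_le {A a b c : ℝ} (hA : 0 ≤ A) (ha : 0 ≤ a) (hb : 0 ≤ b)
    (hc : 0 ≤ c) : |a - b - c| / (A + 1) ^ 2 ≤ a + b + c := by
  rw [div_le_iff₀ (by positivity)]
  calc |a - b - c| ≤ a + b + c := abs_le.2 ⟨by linarith, by linarith⟩
    _ ≤ (a + b + c) * (A + 1) ^ 2 := le_mul_of_one_le_right (by positivity) (by nlinarith)

theorem abs_neg_mul_rpow_sub_one_mul_le {x y c s : ℝ} (hx : 0 < x) (hs : 0 ≤ s)
    (hy : |y| ≤ c * x) : |-s * x ^ (-s - 1) * y| ≤ c * s * x ^ (-s) := by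
  calc |-s * x ^ (-s - 1) * y| = s * x ^ (-s - 1) * |y| := by
        rw [abs_mul, abs_mul, abs_neg, abs_of_nonneg hs, abs_of_pos (by positivity)]
    _ ≤ s * x ^ (-s - 1) * (c * x) := by gcongr
    _ = c * s * (x ^ (-s - 1) * x ^ (1 : ℝ)) := by rw [rpow_one]; ring
    _ = c * s * x ^ (-s) := by rw [← rpow_add hx]; ring_nf

def sumSqTriple (p : ℤ × ℤ × ℤ) : ℝ :=
  (p.1 : ℝ) ^ 2 + (p.2.1 : ℝ) ^ 2 + (p.2.2 : ℝ) ^ 2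

theorem one_le_sumSqTriple {p : ℤ × ℤ × ℤ} (hp : p ≠ 0) : 1 ≤ sumSqTriple p := by
  obtain ⟨i, j, k⟩ := p
  have : (0 : ℤ) < i ^ 2 + j ^ 2 + k ^ 2 := by
    by_contra! h
    apply hp
    simp only [Prod.mk_eq_zero]
    refine ⟨?_, ?_, ?_⟩ <;> nlinarith [sq_nonneg i, sq_nonneg j, sq_nonneg k]
  unfold sumSqTriple
  exact_mod_cast this

theorem summable_one_add_sumSqTriple_rpow_neg {s : ℝ} (hs : 3 / 2 < s) :
    Summable fun p : ℤ × ℤ × ℤ => (1 + sumSqTriple p) ^ (-s) := by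
  set u : ℤ → ℝ := fun n => (1 + (n : ℝ) ^ 2) ^ (-(s / 3))
  have hu : Summable u := summable_one_add_sq_rpow_neg (by linarith)
  have hu0 : ∀ n, 0 ≤ u n := fun n => by positivity
  have hprod : Summable fun p : ℤ × ℤ × ℤ => u p.1 * (u p.2.1 * u p.2.2) :=
    hu.mul_of_nonneg (hu.mul_of_nonneg hu hu0 hu0) hu0 fun q => mul_nonneg (hu0 _) (hu0 _)
  refine hprod.of_nonneg_of_le (fun p => by unfold sumSqTriple; positivity) fun ⟨i, j, k⟩ => ?_
  set x := (i : ℝ) ^ 2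
  set y := (j : ℝ) ^ 2
  set z := (k : ℝ) ^ 2
  change (1 + (x + y + z)) ^ (-s) ≤ _
  have hx : 0 ≤ x := sq_nonneg _
  have hy : 0 ≤ y := sq_nonneg _
  have hz : 0 ≤ z := sq_nonneg _
  have hxyz : (1 + x) * ((1 + y) * (1 + z)) ≤ (1 + (x + y + z)) ^ (3 : ℝ) := by
    rw [rpow_ofNat]
    calc (1 + x) * ((1 + y) * (1 + z))
        ≤ (1 + (x + y + z)) * ((1 + (x + y + z)) * (1 + (x + y + z))) := by
          gcongr <;> linarith
      _ = _ := by ring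
  calc (1 + (x + y + z)) ^ (-s) = ((1 + (x + y + z)) ^ (3 : ℝ)) ^ (-(s / 3)) := by
        rw [← rpow_mul (by positivity)]; ring_nf
    _ ≤ ((1 + x) * ((1 + y) * (1 + z))) ^ (-(s / 3)) :=
        rpow_le_rpow_of_nonpos (by positivity) hxyz (by linarith)
    _ = u i * (u j * u k) := by
        rw [mul_rpow (by positivity) (by positivity), mul_rpow (by positivity) (by positivity)]

noncomputable def cuboidalGDeriv (A : ℝ) (p : ℤ × ℤ × ℤ) : ℝ :=
  (((p.1 : ℝ) + (p.2.1 : ℝ)) ^ 2 - ((p.2.1 : ℝ) + (p.2.2 : ℝ)) ^ 2 -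
    ((p.1 : ℝ) + (p.2.2 : ℝ)) ^ 2) / (A + 1) ^ 2

theorem hasDerivAt_cuboidalG (p : ℤ × ℤ × ℤ) {A : ℝ} (hA : A + 1 ≠ 0) :
    HasDerivAt (cuboidalG · p) (cuboidalGDeriv A p) A := by
  have h := ((((hasDerivAt_id' A).mul_const (((p.1 : ℝ) + p.2.1) ^ 2)).add_const
    (((p.2.1 : ℝ) + p.2.2) ^ 2)).add_const (((p.1 : ℝ) + p.2.2) ^ 2)).div
    ((hasDerivAt_id' A).add_const 1) hA
  refine h.congr_deriv ?_
  rw [cuboidalGDeriv]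
  field_simp
  ring

theorem one_add_sumSqTriple_div_le_cuboidalG {A : ℝ} (hA : A ∈ Icc (1 / 3) 1)
    {p : ℤ × ℤ × ℤ} (hp : p ≠ 0) : (1 + sumSqTriple p) / 8 ≤ cuboidalG A p := by
  have h4 := add_add_le_four_mul_div hA (sq_nonneg ((p.1 : ℝ) + p.2.1))
    (sq_nonneg ((p.2.1 : ℝ) + p.2.2)) (sq_nonneg ((p.1 : ℝ) + p.2.2))
  have h1 := one_le_sumSqTriple hp
  obtain ⟨i, j, k⟩ := p
  unfold sumSqTriple at *
  unfold cuboidalG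
  nlinarith [sq_nonneg ((i : ℝ) + j + k)]

theorem cuboidalG_pos {A : ℝ} (hA : A ∈ Icc (1 / 3) 1) {p : ℤ × ℤ × ℤ} (hp : p ≠ 0) :
    0 < cuboidalG A p :=
  (div_pos (by linarith [one_le_sumSqTriple hp]) (by norm_num)).trans_le
    (one_add_sumSqTriple_div_le_cuboidalG hA hp)

theorem abs_cuboidalGDeriv_le {A : ℝ} (hA : A ∈ Icc (1 / 3) 1) (p : ℤ × ℤ × ℤ) :
    |cuboidalGDeriv A p| ≤ 4 * cuboidalG A p := by
  have ha := sq_nonneg ((p.1 : ℝ) + p.2.1)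
  have hb := sq_nonneg ((p.2.1 : ℝ) + p.2.2)
  have hc := sq_nonneg ((p.1 : ℝ) + p.2.2)
  rw [cuboidalGDeriv, abs_div, abs_of_nonneg (sq_nonneg (A + 1))]
  exact (abs_sub_sub_div_sq_le (by linarith [hA.1]) ha hb hc).trans
    (add_add_le_four_mul_div hA ha hb hc)

theorem cuboidalG_rpow_neg_le {A s : ℝ} (hA : A ∈ Icc (1 / 3) 1) (hs : 0 ≤ s)
    {p : ℤ × ℤ × ℤ} (hp : p ≠ 0) :
    cuboidalG A p ^ (-s) ≤ 8 ^ s * (1 + sumSqTriple p) ^ (-s) := by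
  have hpos : 0 < 1 + sumSqTriple p := by linarith [one_le_sumSqTriple hp]
  calc cuboidalG A p ^ (-s) ≤ ((1 + sumSqTriple p) / 8) ^ (-s) :=
        rpow_le_rpow_of_nonpos (by positivity) (one_add_sumSqTriple_div_le_cuboidalG hA hp)
          (by linarith)
    _ = 8 ^ s * (1 + sumSqTriple p) ^ (-s) := by
        rw [div_rpow hpos.le (by norm_num), rpow_neg (by norm_num : (0 : ℝ) ≤ 8)]
        field_simp

theorem abs_deriv_cuboidalG_rpow_neg_le {A s : ℝ} (hA : A ∈ Icc (1 / 3) 1) (hs : 0 ≤ s)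
    {p : ℤ × ℤ × ℤ} (hp : p ≠ 0) :
    |-s * cuboidalG A p ^ (-s - 1) * cuboidalGDeriv A p| ≤
      4 * s * 8 ^ s * (1 + sumSqTriple p) ^ (-s) := by
  calc |-s * cuboidalG A p ^ (-s - 1) * cuboidalGDeriv A p|
      ≤ 4 * s * cuboidalG A p ^ (-s) :=
        abs_neg_mul_rpow_sub_one_mul_le (cuboidalG_pos hA hp) hs (abs_cuboidalGDeriv_le hA p)
    _ ≤ 4 * s * (8 ^ s * (1 + sumSqTriple p) ^ (-s)) := by
        gcongr; exact cuboidalG_rpow_neg_le hA hs hp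
    _ = 4 * s * 8 ^ s * (1 + sumSqTriple p) ^ (-s) := by ring

theorem summable_deriv_cuboidalG_rpow_neg {s A : ℝ} (hs : 3 / 2 < s) (hA : A ∈ Icc (1 / 3) 1) :
    Summable fun p : {p : ℤ × ℤ × ℤ // p ≠ 0} =>
      -s * cuboidalG A p ^ (-s - 1) * cuboidalGDeriv A p :=
  (((summable_one_add_sumSqTriple_rpow_neg hs).subtype _).mul_left
    (4 * s * 8 ^ s)).of_norm_bounded fun p => abs_deriv_cuboidalG_rpow_neg_le hA (by linarith) p.2

theorem summable_cuboidalG_rpow_neg {s A : ℝ} (hs : 3 / 2 < s) (hA : A ∈ Icc (1 / 3) 1) :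
    Summable fun p : {p : ℤ × ℤ × ℤ // p ≠ 0} => cuboidalG A p ^ (-s) :=
  (((summable_one_add_sumSqTriple_rpow_neg hs).subtype _).mul_left (8 ^ s)).of_nonneg_of_le
    (fun p => rpow_nonneg (cuboidalG_pos hA p.2).le _)
    fun p => cuboidalG_rpow_neg_le hA (by linarith) p.2

theorem hasDerivAt_epsteinL {s A : ℝ} (hs : 3 / 2 < s) (hA : A ∈ Ioo (1 / 3) 1) :
    HasDerivAt (epsteinL · s) (∑' p : {p : ℤ × ℤ × ℤ // p ≠ 0},
      -s * cuboidalG A p ^ (-s - 1) * cuboidalGDeriv A p) A := by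
  refine hasDerivAt_tsum_of_isPreconnected
    (g' := fun (p : {p : ℤ × ℤ × ℤ // p ≠ 0}) B =>
      -s * cuboidalG B p ^ (-s - 1) * cuboidalGDeriv B p)
    (((summable_one_add_sumSqTriple_rpow_neg hs).subtype _).mul_left (4 * s * 8 ^ s))
    isOpen_Ioo isPreconnected_Ioo (fun p B hB => ?_)
    (fun p B hB => abs_deriv_cuboidalG_rpow_neg_le (Ioo_subset_Icc_self hB) (by linarith) p.2)
    hA (summable_cuboidalG_rpow_neg hs (Ioo_subset_Icc_self hA)) hA
  have hpos := cuboidalG_pos (Ioo_subset_Icc_self hB) p.2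
  exact ((hasDerivAt_cuboidalG p (by linarith [hB.1])).rpow_const (.inl hpos.ne')).congr_deriv
    (by ring)

def bccRotation : (ℤ × ℤ × ℤ) ≃+ (ℤ × ℤ × ℤ) where
  toFun p := (p.1 + p.2.2, -p.2.1 - p.2.2, p.2.1)
  invFun p := (p.1 + p.2.1 + p.2.2, p.2.2, -p.2.1 - p.2.2)
  left_inv := fun _ => by ext <;> dsimp <;> ring
  right_inv := fun _ => by ext <;> dsimp <;> ring
  map_add' := fun _ _ => by ext <;> dsimp <;> ring

theorem cuboidalG_half_bccRotation (p : ℤ × ℤ × ℤ) :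
    cuboidalG (1 / 2) (bccRotation p) = cuboidalG (1 / 2) p := by
  simp only [cuboidalG, bccRotation, AddEquiv.coe_mk, Equiv.coe_fn_mk]
  push_cast
  ring

theorem cuboidalGDeriv_add_bccRotation_add_bccRotation (A : ℝ) (p : ℤ × ℤ × ℤ) :
    cuboidalGDeriv A p + cuboidalGDeriv A (bccRotation p) +
      cuboidalGDeriv A (bccRotation (bccRotation p)) = 0 := by
  simp only [cuboidalGDeriv, bccRotation, AddEquiv.coe_mk, Equiv.coe_fn_mk]
  push_cast
  ring

/-- For fixed real `s > 3/2`, the partial derivative of `L(A;s)` with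
respect to `A`, evaluated at `A = 1/2`, equals `0`. -/
theorem epsteinL_deriv_at_half (s : ℝ) (hs : s > 3/2) :
    deriv (fun A : ℝ => epsteinL A s) (1/2) = 0 := by
  have hhalf : (1 / 2 : ℝ) ∈ Ioo (1 / 3) 1 := by norm_num
  rw [(hasDerivAt_epsteinL hs hhalf).deriv]
  refine tsum_eq_zero_of_add_comp_add_comp_eq_zero
    (summable_deriv_cuboidalG_rpow_neg hs (Ioo_subset_Icc_self hhalf))
    (bccRotation.toEquiv.subtypeEquiv fun p => (map_ne_zero_iff _ bccRotation.injective).symm)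
    fun p => ?_
  simp only [Equiv.subtypeEquiv_apply, AddEquiv.toEquiv_eq_coe, EquivLike.coe_coe,
    cuboidalG_half_bccRotation]
  linear_combination (-s * cuboidalG (1 / 2) p ^ (-s - 1)) *
    cuboidalGDeriv_add_bccRotation_add_bccRotation (1 / 2) p
end

section
/- Fix a real s > 3/2. The second partial derivative of L(A;s) with respect to A, evaluated at A = 1/2, equals (64s(s+1)/81)·Σ'_{i,j,k∈ℤ} (jk + ik − 2ij)²/(i² + j² + k² − (2/3)(ij + ik + jk))^{s+2}, where the sum omits (i,j,k) = (0,0,0). -/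
/-!
Write `g(A; p) = (i+j)² - D(p)/(A+1)` with `D(p) = (i+j)² - (j+k)² - (i+k)²`, so that
`∂g/∂A = D/(A+1)²`. For `1/3 < A < 1` one has `g ≥ |p|²/6` and `|D| ≤ 4|p|²`, so the termwise first
and second `A`-derivatives of `g^(-s)` are dominated by a multiple of `|p|^(-2s)`, which is summable
over `ℤ³` for `s > 3/2`; hence `L` may be differentiated twice under the sum. At `A = 1/2` the
second derivative of `g^(-s)` is `(16/81) s(s+1) D² g^(-s-2) + (16/27) s D g^(-s-1)`. The sum of the
second part vanishes: the bcc form has an automorphism `σ` of order three with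
`D + D ∘ σ + D ∘ σ² = 0`. In the coordinates `p = (-i, k-j, j)` the bcc form becomes
`i² + j² + k² - (2/3)(ij + ik + jk)` and `D(p) = -2(jk + ik - 2ij)`, which turns the first part into
the sum of the statement, with the factor `4 · 16/81 = 64/81`.
-/

open Real Filter Topology

theorem summable_sum_sq_rpow_neg {ι : Type*} [Fintype ι] {t : ℝ} (ht : Fintype.card ι < 2 * t) :
    Summable fun p : ι → ℤ => (∑ i, (p i : ℝ) ^ 2) ^ (-t) := by
  classical
  let b := (EuclideanSpace.basisFun ι ℝ).toBasis.restrictScalars ℤ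
  have hL : Summable fun z : Submodule.span ℤ (Set.range (EuclideanSpace.basisFun ι ℝ).toBasis) =>
      ‖(z : EuclideanSpace ℝ ι)‖ ^ (-(2 * t)) := by
    refine ZLattice.summable_norm_rpow _ _ ?_
    rw [ZLattice.rank ℝ, finrank_euclideanSpace]
    linarith
  have hb (p : ι → ℤ) : (b.equivFun.symm p : EuclideanSpace ℝ ι) =
      WithLp.toLp 2 (fun i => (p i : ℝ)) := by
    ext j
    rw [Module.Basis.equivFun_symm_apply, Submodule.coe_sum]
    simp only [b, Submodule.coe_smul_of_tower, Module.Basis.restrictScalars_apply]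
    simp [Pi.single_apply]
  refine ((b.equivFun.symm.toEquiv.summable_iff).mpr hL).congr fun p => ?_
  simp only [Function.comp_apply, LinearEquiv.coe_toEquiv, hb, EuclideanSpace.norm_eq,
    Real.norm_eq_abs, sq_abs]
  rw [sqrt_eq_rpow, ← rpow_mul (by positivity)]
  ring_nf

theorem abs_pow_mul_rpow_neg_sub_le {D G N c C s : ℝ} (m : ℕ) (hs : 0 ≤ s) (hc : 0 < c)
    (hN : 0 < N) (hG : c * N ≤ G) (hD : |D| ≤ C * N) :
    |D ^ m * G ^ (-s - m)| ≤ (C / c) ^ m * (c * N) ^ (-s) := by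
  have hcN : 0 < c * N := mul_pos hc hN
  have hG0 : 0 < G := hcN.trans_le hG
  have hsplit : D ^ m * G ^ (-s - m) = (D / G) ^ m * G ^ (-s) := by
    rw [rpow_sub_natCast hG0.ne', div_pow]
    ring
  have hratio : |D / G| ≤ C / c := by
    rw [abs_div, abs_of_pos hG0, div_le_div_iff₀ hG0 hc]
    nlinarith [abs_nonneg D]
  rw [hsplit, abs_mul, abs_pow, abs_of_pos (rpow_pos_of_pos hG0 _)]
  exact mul_le_mul (pow_le_pow_left₀ (abs_nonneg _) hratio m)
    (rpow_le_rpow_of_nonpos hcN hG (neg_nonpos.2 hs)) (by positivity)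
    (pow_nonneg ((abs_nonneg _).trans hratio) m)

theorem abs_mul_div_one_add_pow_le {c X A : ℝ} (hA : 0 ≤ A) (n : ℕ) :
    |c * X / (A + 1) ^ n| ≤ |c| * |X| := by
  rw [abs_div, abs_mul, abs_of_pos (by positivity : 0 < (A + 1) ^ n)]
  exact div_le_self (by positivity) (one_le_pow₀ (by linarith))

theorem deriv_deriv_tsum_of_isPreconnected {α 𝕜 F : Type*} [NontriviallyNormedField 𝕜]
    [IsRCLikeNormedField 𝕜] [NormedAddCommGroup F] [CompleteSpace F] [NormedSpace 𝕜 F]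
    {f f' f'' : α → 𝕜 → F} {u' u'' : α → ℝ} {t : Set 𝕜} {y₀ y : 𝕜}
    (hu' : Summable u') (hu'' : Summable u'') (ht : IsOpen t) (h't : IsPreconnected t)
    (hf : ∀ n z, z ∈ t → HasDerivAt (f n) (f' n z) z)
    (hf' : ∀ n z, z ∈ t → HasDerivAt (f' n) (f'' n z) z)
    (hf'_le : ∀ n z, z ∈ t → ‖f' n z‖ ≤ u' n) (hf''_le : ∀ n z, z ∈ t → ‖f'' n z‖ ≤ u'' n)
    (hy₀ : y₀ ∈ t) (hf0 : Summable fun n => f n y₀) (hy : y ∈ t) :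
    deriv (deriv fun z => ∑' n, f n z) y = ∑' n, f'' n y := by
  have hderiv : deriv (fun z => ∑' n, f n z) =ᶠ[𝓝 y] fun z => ∑' n, f' n z := by
    filter_upwards [ht.mem_nhds hy] with z hz
    exact (hasDerivAt_tsum_of_isPreconnected hu' ht h't hf hf'_le hy₀ hf0 hz).deriv
  rw [hderiv.deriv_eq]
  exact (hasDerivAt_tsum_of_isPreconnected hu'' ht h't hf' hf''_le hy
    (.of_norm_bounded hu' (hf'_le · y hy)) hy).deriv

theorem tsum_eq_zero_of_add_add_eq_zero {ι E : Type*} [AddCommGroup E] [TopologicalSpace E]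
    [ContinuousAdd E] [T2Space E] [NoZeroSMulDivisors ℕ E] {f : ι → E} (hf : Summable f)
    (σ : Equiv.Perm ι) (h : ∀ i, f i + f (σ i) + f (σ (σ i)) = 0) : ∑' i, f i = 0 := by
  have hσ : Summable fun i => f (σ i) := σ.summable_iff.mpr hf
  have hσσ : Summable fun i => f (σ (σ i)) := σ.summable_iff.mpr hσ
  have e1 : ∑' i, f (σ i) = ∑' i, f i := σ.tsum_eq f
  have e2 : ∑' i, f (σ (σ i)) = ∑' i, f i := (σ.tsum_eq _).trans e1
  have h3 : 3 • ∑' i, f i = 0 := calc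
    3 • ∑' i, f i = ∑' i, f i + ∑' i, f (σ i) + ∑' i, f (σ (σ i)) := by
      rw [e1, e2]
      abel
    _ = 0 := by rw [← hf.tsum_add hσ, ← (hf.add hσ).tsum_add hσσ, tsum_congr h, tsum_zero]
  simpa using h3

def AddEquiv.nonzero {M N : Type*} [AddZeroClass M] [AddZeroClass N] (e : M ≃+ N) :
    {x : M // x ≠ 0} ≃ {y : N // y ≠ 0} :=
  e.toEquiv.subtypeEquiv fun _ => (map_ne_zero_iff e).symm

theorem AddEquiv.coe_nonzero_apply {M N : Type*} [AddZeroClass M] [AddZeroClass N] (e : M ≃+ N)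
    (x : {x : M // x ≠ 0}) : (e.nonzero x : N) = e x :=
  rfl

namespace Cuboidal

noncomputable def normSq (p : ℤ × ℤ × ℤ) : ℝ := (p.1 : ℝ) ^ 2 + (p.2.1 : ℝ) ^ 2 + (p.2.2 : ℝ) ^ 2

/-- `cuboidalG A p = (i+j)² - slope p / (A+1)`, so `slope p / (A+1)²` is the `A`-derivative. -/
noncomputable def slope (p : ℤ × ℤ × ℤ) : ℝ :=
  ((p.1 : ℝ) + p.2.1) ^ 2 - ((p.2.1 : ℝ) + p.2.2) ^ 2 - ((p.1 : ℝ) + p.2.2) ^ 2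

noncomputable def slopeTerm (s : ℝ) (m : ℕ) (A : ℝ) (p : ℤ × ℤ × ℤ) : ℝ :=
  slope p ^ m * cuboidalG A p ^ (-s - m)

noncomputable def termDeriv (s : ℝ) (p : ℤ × ℤ × ℤ) (A : ℝ) : ℝ :=
  -s * slopeTerm s 1 A p / (A + 1) ^ 2

noncomputable def termDeriv2 (s : ℝ) (p : ℤ × ℤ × ℤ) (A : ℝ) : ℝ :=
  s * (s + 1) * slopeTerm s 2 A p / (A + 1) ^ 4 + 2 * s * slopeTerm s 1 A p / (A + 1) ^ 3

theorem normSq_pos {p : ℤ × ℤ × ℤ} (hp : p ≠ 0) : 0 < normSq p := by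
  obtain ⟨i, j, k⟩ := p
  have : (i : ℝ) ≠ 0 ∨ (j : ℝ) ≠ 0 ∨ (k : ℝ) ≠ 0 := by
    contrapose! hp
    simp_all
  unfold normSq
  rcases this with h | h | h <;> positivity

theorem summable_mul_normSq_rpow_neg {c t : ℝ} (hc : 0 ≤ c) (ht : 3 / 2 < t) :
    Summable fun p : ℤ × ℤ × ℤ => (c * normSq p) ^ (-t) := by
  have hinj : Function.Injective fun p : ℤ × ℤ × ℤ => ![p.1, p.2.1, p.2.2] := by
    intro p q h
    simp_all [Prod.ext_iff]
  refine (((summable_sum_sq_rpow_neg (ι := Fin 3) (by simp; linarith)).comp_injective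
    hinj).mul_left (c ^ (-t))).congr fun p => ?_
  rw [mul_rpow hc (by unfold normSq; positivity)]
  simp [normSq, Fin.sum_univ_three]

theorem hasDerivAt_cuboidalG (p : ℤ × ℤ × ℤ) {A : ℝ} (hA : A + 1 ≠ 0) :
    HasDerivAt (fun B => cuboidalG B p) (slope p / (A + 1) ^ 2) A := by
  have h := (((hasDerivAt_id' A).mul_const (((p.1 : ℝ) + p.2.1) ^ 2)).add_const
    (((p.2.1 : ℝ) + p.2.2) ^ 2 + ((p.1 : ℝ) + p.2.2) ^ 2)).fun_div
    ((hasDerivAt_id' A).add_const 1) hA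
  have hfun : (fun B => cuboidalG B p) = fun B => (B * ((p.1 : ℝ) + p.2.1) ^ 2 +
      (((p.2.1 : ℝ) + p.2.2) ^ 2 + ((p.1 : ℝ) + p.2.2) ^ 2)) / (B + 1) := by
    funext B
    simp only [cuboidalG]
    ring
  rw [hfun]
  refine h.congr_deriv ?_
  simp only [slope]
  field_simp
  ring

theorem hasDerivAt_cuboidalG_rpow (s : ℝ) {p : ℤ × ℤ × ℤ} {A : ℝ} (hA : A + 1 ≠ 0)
    (hG : cuboidalG A p ≠ 0) :
    HasDerivAt (fun B => cuboidalG B p ^ (-s)) (termDeriv s p A) A := by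
  convert (hasDerivAt_cuboidalG p hA).rpow_const (p := -s) (Or.inl hG) using 1
  simp only [termDeriv, slopeTerm]
  push_cast
  ring

theorem hasDerivAt_termDeriv (s : ℝ) {p : ℤ × ℤ × ℤ} {A : ℝ} (hA : A + 1 ≠ 0)
    (hG : cuboidalG A p ≠ 0) :
    HasDerivAt (termDeriv s p) (termDeriv2 s p A) A := by
  have h := (((hasDerivAt_cuboidalG p hA).rpow_const (p := -s - 1) (Or.inl hG)).const_mul
    (-s * slope p)).fun_div (((hasDerivAt_id' A).add_const 1).fun_pow 2) (pow_ne_zero 2 hA)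
  have hfun : termDeriv s p = fun B => -s * slope p * cuboidalG B p ^ (-s - 1) / (B + 1) ^ 2 := by
    funext B
    simp only [termDeriv, slopeTerm]
    push_cast
    ring
  rw [hfun]
  refine h.congr_deriv ?_
  simp only [termDeriv2, slopeTerm]
  push_cast
  rw [show -s - 1 - 1 = -s - 2 by ring]
  field_simp
  ring

theorem le_cuboidalG {A : ℝ} (hA : A ∈ Set.Ioo (1 / 3) 1) (p : ℤ × ℤ × ℤ) :
    1 / 6 * normSq p ≤ cuboidalG A p := by
  obtain ⟨i, j, k⟩ := p
  obtain ⟨hA₁, hA₂⟩ := hA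
  simp only [normSq, cuboidalG]
  rw [le_div_iff₀ (by linarith)]
  nlinarith [mul_nonneg (sub_nonneg.2 hA₁.le) (sq_nonneg ((i : ℝ) + j)),
    mul_nonneg (sub_nonneg.2 hA₂.le) (add_nonneg (add_nonneg (sq_nonneg (i : ℝ))
      (sq_nonneg (j : ℝ))) (sq_nonneg (k : ℝ))),
    sq_nonneg ((i : ℝ) + j + k), sq_nonneg ((j : ℝ) + k), sq_nonneg ((i : ℝ) + k)]

theorem abs_slope_le (p : ℤ × ℤ × ℤ) : |slope p| ≤ 4 * normSq p := by
  obtain ⟨i, j, k⟩ := p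
  simp only [slope, normSq]
  rw [abs_le]
  constructor <;> nlinarith [sq_nonneg ((i : ℝ) - j), sq_nonneg ((j : ℝ) - k),
    sq_nonneg ((i : ℝ) - k), sq_nonneg ((i : ℝ) + j), sq_nonneg ((j : ℝ) + k),
    sq_nonneg ((i : ℝ) + k)]

theorem abs_slopeTerm_le {s : ℝ} (hs : 0 ≤ s) (m : ℕ) {A : ℝ} (hA : A ∈ Set.Ioo (1 / 3) 1)
    {p : ℤ × ℤ × ℤ} (hp : p ≠ 0) :
    |slopeTerm s m A p| ≤ 24 ^ m * (1 / 6 * normSq p) ^ (-s) := by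
  have h := abs_pow_mul_rpow_neg_sub_le m hs (by norm_num) (normSq_pos hp) (le_cuboidalG hA p)
    (abs_slope_le p)
  rwa [show (4 : ℝ) / (1 / 6) = 24 by norm_num] at h

theorem summable_slopeTerm {s : ℝ} (hs : 3 / 2 < s) (m : ℕ) {A : ℝ}
    (hA : A ∈ Set.Ioo (1 / 3) 1) :
    Summable fun p : {p : ℤ × ℤ × ℤ // p ≠ 0} => slopeTerm s m A p :=
  .of_norm_bounded (((summable_mul_normSq_rpow_neg (by norm_num) hs).subtype _).mul_left (24 ^ m))
    fun p => abs_slopeTerm_le (by linarith) m hA p.2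

theorem abs_termDeriv_le {s : ℝ} (hs : 0 ≤ s) {A : ℝ} (hA : A ∈ Set.Ioo (1 / 3) 1)
    {p : ℤ × ℤ × ℤ} (hp : p ≠ 0) :
    |termDeriv s p A| ≤ 24 * s * (1 / 6 * normSq p) ^ (-s) := by
  calc |termDeriv s p A| ≤ |-s| * |slopeTerm s 1 A p| :=
        abs_mul_div_one_add_pow_le (by linarith [hA.1]) 2
    _ ≤ s * (24 ^ 1 * (1 / 6 * normSq p) ^ (-s)) := by
        rw [abs_neg, abs_of_nonneg hs]
        gcongr
        exact abs_slopeTerm_le hs 1 hA hp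
    _ = 24 * s * (1 / 6 * normSq p) ^ (-s) := by ring

theorem abs_termDeriv2_le {s : ℝ} (hs : 0 ≤ s) {A : ℝ} (hA : A ∈ Set.Ioo (1 / 3) 1)
    {p : ℤ × ℤ × ℤ} (hp : p ≠ 0) :
    |termDeriv2 s p A| ≤ (24 ^ 2 * s * (s + 1) + 48 * s) * (1 / 6 * normSq p) ^ (-s) := by
  have hA₀ : 0 ≤ A := by linarith [hA.1]
  calc |termDeriv2 s p A|
      ≤ |s * (s + 1)| * |slopeTerm s 2 A p| + |2 * s| * |slopeTerm s 1 A p| :=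
        (abs_add_le _ _).trans (add_le_add (abs_mul_div_one_add_pow_le hA₀ 4)
          (abs_mul_div_one_add_pow_le hA₀ 3))
    _ ≤ s * (s + 1) * (24 ^ 2 * (1 / 6 * normSq p) ^ (-s))
        + 2 * s * (24 ^ 1 * (1 / 6 * normSq p) ^ (-s)) := by
        rw [abs_of_nonneg (show 0 ≤ s * (s + 1) by nlinarith),
          abs_of_nonneg (show 0 ≤ 2 * s by linarith)]
        gcongr <;> exact abs_slopeTerm_le hs _ hA hp
    _ = (24 ^ 2 * s * (s + 1) + 48 * s) * (1 / 6 * normSq p) ^ (-s) := by ring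

theorem deriv_deriv_epsteinL {s : ℝ} (hs : 3 / 2 < s) {A : ℝ} (hA : A ∈ Set.Ioo (1 / 3) 1) :
    deriv (deriv fun B => epsteinL B s) A = ∑' p : {p : ℤ × ℤ × ℤ // p ≠ 0}, termDeriv2 s p A := by
  have hs₀ : 0 ≤ s := by linarith
  have hu := (summable_mul_normSq_rpow_neg (c := 1 / 6) (by norm_num) hs).subtype {p | p ≠ 0}
  have hB₁ (B : ℝ) (hB : B ∈ Set.Ioo (1 / 3) 1) : B + 1 ≠ 0 := by linarith [hB.1]
  have hG (B : ℝ) (hB : B ∈ Set.Ioo (1 / 3) 1) (p : {p : ℤ × ℤ × ℤ // p ≠ 0}) :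
      cuboidalG B p ≠ 0 :=
    ((mul_pos (by norm_num) (normSq_pos p.2)).trans_le (le_cuboidalG hB p)).ne'
  exact deriv_deriv_tsum_of_isPreconnected (hu.mul_left (24 * s))
    (hu.mul_left (24 ^ 2 * s * (s + 1) + 48 * s)) isOpen_Ioo isPreconnected_Ioo
    (fun p B hB => hasDerivAt_cuboidalG_rpow s (hB₁ B hB) (hG B hB p))
    (fun p B hB => hasDerivAt_termDeriv s (hB₁ B hB) (hG B hB p))
    (fun p B hB => abs_termDeriv_le hs₀ hB p.2) (fun p B hB => abs_termDeriv2_le hs₀ hB p.2) hA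
    (by simpa [slopeTerm] using summable_slopeTerm hs 0 hA) hA

theorem termDeriv2_half (s : ℝ) (p : ℤ × ℤ × ℤ) :
    termDeriv2 s p (1 / 2) =
      16 / 81 * s * (s + 1) * slopeTerm s 2 (1 / 2) p + 16 / 27 * s * slopeTerm s 1 (1 / 2) p := by
  rw [termDeriv2]
  norm_num
  ring

def bccCoords : (ℤ × ℤ × ℤ) ≃+ (ℤ × ℤ × ℤ) where
  toFun q := (-q.1, q.2.2 - q.2.1, q.2.1)
  invFun p := (-p.1, p.2.2, p.2.1 + p.2.2)
  left_inv q := by ext <;> simp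
  right_inv p := by ext <;> simp
  map_add' p q := by ext <;> simp <;> ring

/-- The cyclic shift of coordinates, conjugated by `bccCoords`. -/
def bccRotation : (ℤ × ℤ × ℤ) ≃+ (ℤ × ℤ × ℤ) where
  toFun p := (-p.2.2, -p.1 - p.2.1 - p.2.2, p.2.1 + p.2.2)
  invFun p := (-p.2.1 - p.2.2, p.1 + p.2.2, -p.1)
  left_inv p := by ext <;> simp; ring
  right_inv p := by ext <;> simp; ring
  map_add' p q := by ext <;> simp <;> ring

theorem cuboidalG_half_bccRotation (p : ℤ × ℤ × ℤ) :
    cuboidalG (1 / 2) (bccRotation p) = cuboidalG (1 / 2) p := by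
  simp only [cuboidalG, bccRotation, AddEquiv.coe_mk, Equiv.coe_fn_mk]
  push_cast
  ring

theorem slope_add_slope_bccRotation_add_slope_bccRotation (p : ℤ × ℤ × ℤ) :
    slope p + slope (bccRotation p) + slope (bccRotation (bccRotation p)) = 0 := by
  simp only [slope, bccRotation, AddEquiv.coe_mk, Equiv.coe_fn_mk]
  push_cast
  ring

theorem tsum_slopeTerm_one_half {s : ℝ} (hs : 3 / 2 < s) :
    ∑' p : {p : ℤ × ℤ × ℤ // p ≠ 0}, slopeTerm s 1 (1 / 2) p = 0 := by
  refine tsum_eq_zero_of_add_add_eq_zero (summable_slopeTerm hs 1 (by norm_num))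
    bccRotation.nonzero fun p => ?_
  simp only [slopeTerm, AddEquiv.coe_nonzero_apply, cuboidalG_half_bccRotation, pow_one]
  linear_combination cuboidalG (1 / 2) p ^ (-s - ((1 : ℕ) : ℝ)) *
    slope_add_slope_bccRotation_add_slope_bccRotation p

theorem tsum_slopeTerm_two_half (s : ℝ) :
    ∑' p : {p : ℤ × ℤ × ℤ // p ≠ 0}, slopeTerm s 2 (1 / 2) p =
      4 * ∑' p : {p : ℤ × ℤ × ℤ // p ≠ 0},
        (((p.1.2.1 * p.1.2.2 + p.1.1 * p.1.2.2 - 2 * p.1.1 * p.1.2.1 : ℤ) : ℝ))^2 /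
          ((p.1.1 : ℝ)^2 + (p.1.2.1 : ℝ)^2 + (p.1.2.2 : ℝ)^2
            - 2/3 * ((p.1.1 : ℝ) * (p.1.2.1 : ℝ) + (p.1.1 : ℝ) * (p.1.2.2 : ℝ)
              + (p.1.2.1 : ℝ) * (p.1.2.2 : ℝ))) ^ (s + 2) := by
  rw [← bccCoords.nonzero.tsum_eq, ← tsum_mul_left]
  refine tsum_congr fun ⟨⟨i, j, k⟩, _⟩ => ?_
  have hG : cuboidalG (1 / 2) (bccCoords (i, j, k)) =
      (i : ℝ) ^ 2 + (j : ℝ) ^ 2 + (k : ℝ) ^ 2 - 2 / 3 * (i * j + i * k + j * k) := by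
    simp only [cuboidalG, bccCoords, AddEquiv.coe_mk, Equiv.coe_fn_mk]
    push_cast
    ring
  have hslope : slope (bccCoords (i, j, k)) = -2 * (j * k + i * k - 2 * i * j) := by
    simp only [slope, bccCoords, AddEquiv.coe_mk, Equiv.coe_fn_mk]
    push_cast
    ring
  have hQ : 0 ≤ (i : ℝ) ^ 2 + (j : ℝ) ^ 2 + (k : ℝ) ^ 2 - 2 / 3 * (i * j + i * k + j * k) := by
    nlinarith [sq_nonneg ((i : ℝ) - j), sq_nonneg ((j : ℝ) - k), sq_nonneg ((i : ℝ) - k)]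
  simp only [slopeTerm, AddEquiv.coe_nonzero_apply, hG, hslope]
  rw [show -s - ((2 : ℕ) : ℝ) = -(s + 2) by push_cast; ring, rpow_neg hQ]
  push_cast
  ring

end Cuboidal

open Cuboidal

/-- For fixed real `s > 3/2`, the second partial derivative of `L(A;s)`
with respect to `A` at `A = 1/2` equals
`(64s(s+1)/81)·Σ' (jk+ik−2ij)²/(i²+j²+k²−(2/3)(ij+ik+jk))^{s+2}`. -/
theorem epsteinL_second_deriv_at_half (s : ℝ) (hs : s > 3/2) :
    deriv (deriv (fun A : ℝ => epsteinL A s)) (1/2) =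
      64 * s * (s + 1) / 81 * ∑' p : {p : ℤ × ℤ × ℤ // p ≠ 0},
        (((p.1.2.1 * p.1.2.2 + p.1.1 * p.1.2.2 - 2 * p.1.1 * p.1.2.1 : ℤ) : ℝ))^2 /
          ((p.1.1 : ℝ)^2 + (p.1.2.1 : ℝ)^2 + (p.1.2.2 : ℝ)^2
            - 2/3 * ((p.1.1 : ℝ) * (p.1.2.1 : ℝ) + (p.1.1 : ℝ) * (p.1.2.2 : ℝ)
              + (p.1.2.1 : ℝ) * (p.1.2.2 : ℝ))) ^ (s + 2) := by
  rw [deriv_deriv_epsteinL hs (by norm_num),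
    tsum_congr fun p : {p : ℤ × ℤ × ℤ // p ≠ 0} => termDeriv2_half s p,
    ((summable_slopeTerm hs 2 (by norm_num)).mul_left _).tsum_add
      ((summable_slopeTerm hs 1 (by norm_num)).mul_left _),
    tsum_mul_left, tsum_mul_left, tsum_slopeTerm_one_half hs, tsum_slopeTerm_two_half]
  ring
end
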